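/- arXiv:1509.06645 — 2 statements merged into one kernel-verified Lean document; each statement's English description precedes it below -/
import Mathlib

section
/- Let (λ_j) be a nondecreasing sequence of nonnegative reals tending to infinity with counting function N(λ) = #{j : λ_j ≤ λ}, and suppose ∑_j e^{-tλ_j} ~ A t^{-d/2} as t → 0⁺ for some constants A > 0 and d > 0. Then N(λ) ~ (A/Γ(d/2+1)) λ^{d/2} as λ → ∞. -/
/-!
Karamata's argument, with `c = d/2` and `x_j = e^{-tλ_j} ∈ (0, 1]`. Applied at `(n+1)t`, the
hypothesis `t^c ∑_j x_j → A` gives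
`t^c ∑_j x_j^{n+1} → A (n+1)^{-c} = (A/Γ(c)) ∫_0^∞ s^{c-1} e^{-(n+1)s} ds`,
hence by linearity `t^c ∑_j g(x_j) → (A/Γ(c)) ∫_0^∞ s^{c-1} g(e^{-s}) ds` for every `g = X * P`
with `P` a polynomial (the factor `X` keeps the sums finite).
Now `N(1/t) = ∑_j 1_{[e^{-1},∞)}(x_j)`, and by Weierstrass this step function can be squeezed
on `[0, 1]` between such `g` whose integrals are arbitrarily close to `∫_0^1 s^{c-1} ds = 1/c`.
So `t^c N(1/t) → A/Γ(c+1)`.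
-/

open Filter Real MeasureTheory Set Polynomial Topology

noncomputable def countingFunction (lam : ℕ → ℝ) (x : ℝ) : ℝ := Nat.card {j | lam j ≤ x}

theorem exists_polynomial_le_X_mul_le {h : ℝ → ℝ} {δ ε : ℝ} (hh : ContinuousOn h (Icc 0 1))
    (hδ : 0 < δ) (h0 : EqOn h 0 (Icc 0 δ)) (hε : 0 < ε) :
    ∃ P : ℝ[X], ∀ x ∈ Icc (0 : ℝ) 1,
      h x ≤ (X * P).eval x ∧ (X * P).eval x ≤ h x + ε * x := by
  -- approximate `h x / x`, made continuous by flattening the denominator where `h` vanishes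
  have hcont : ContinuousOn (fun x => h x / max x δ) (Icc 0 1) :=
    hh.div (continuous_id.max continuous_const).continuousOn
      fun x _ => (hδ.trans_le (le_max_right x δ)).ne'
  obtain ⟨q, hq⟩ := exists_polynomial_near_of_continuousOn 0 1 _ hcont (ε / 2) (half_pos hε)
  refine ⟨q + C (ε / 2), fun x hx => ?_⟩
  have hmul : x * (h x / max x δ) = h x := by
    rcases le_total x δ with hxδ | hδx
    · simp [h0 ⟨hx.1, hxδ⟩]
    · rw [max_eq_left hδx, mul_div_cancel₀ _ (hδ.trans_le hδx).ne']
  obtain ⟨hlow, hup⟩ := abs_sub_lt_iff.1 (hq x hx)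
  simp only [eval_mul, eval_X, eval_add, eval_C]
  constructor <;> nlinarith [mul_le_mul_of_nonneg_left hlow.le hx.1,
    mul_le_mul_of_nonneg_left hup.le hx.1]

theorem exists_polynomial_sub_le_X_mul_le {h : ℝ → ℝ} {δ ε : ℝ} (hh : ContinuousOn h (Icc 0 1))
    (hδ : 0 < δ) (h0 : EqOn h 0 (Icc 0 δ)) (hε : 0 < ε) :
    ∃ P : ℝ[X], ∀ x ∈ Icc (0 : ℝ) 1,
      h x - ε * x ≤ (X * P).eval x ∧ (X * P).eval x ≤ h x := by
  obtain ⟨P, hP⟩ := exists_polynomial_le_X_mul_le hh.neg hδ (fun x hx => by simp [h0 hx]) hε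
  refine ⟨-P, fun x hx => ?_⟩
  have := hP x hx
  simp only [Pi.neg_apply, eval_mul, eval_X, eval_neg] at this ⊢
  constructor <;> linarith

theorem exists_continuous_indicator_le_le {u v : ℝ} (huv : u < v) :
    ∃ h : C(ℝ, ℝ), EqOn h 0 (Iic u) ∧
      ∀ x, (Ici v).indicator 1 x ≤ h x ∧ h x ≤ (Ici u).indicator 1 x := by
  obtain ⟨h, h0, h1, hmem⟩ := exists_continuous_zero_one_of_isClosed isClosed_Iic isClosed_Ici
    (Iic_disjoint_Ici.2 (not_le.2 huv))
  refine ⟨h, h0, fun x => ⟨?_, ?_⟩⟩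
  · by_cases hx : x ∈ Ici v
    · simp [indicator_of_mem hx, h1 hx]
    · simpa [indicator_of_notMem hx] using (hmem x).1
  · by_cases hx : x ∈ Ici u
    · simpa [indicator_of_mem hx] using (hmem x).2
    · rw [indicator_of_notMem hx, h0 (mem_Iic.2 (not_le.1 hx).le), Pi.zero_apply]

theorem exists_polynomial_indicator_le_le {u v η : ℝ} (hu : 0 < u) (huv : u < v) (hη : 0 < η) :
    ∃ P : ℝ[X], ∀ x ∈ Icc (0 : ℝ) 1,
      (Ici v).indicator 1 x ≤ (X * P).eval x ∧
        (X * P).eval x ≤ (Ici u).indicator 1 x + η * x := by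
  obtain ⟨h, h0, hh⟩ := exists_continuous_indicator_le_le huv
  obtain ⟨P, hP⟩ := exists_polynomial_le_X_mul_le h.continuous.continuousOn hu
    (fun x hx => h0 hx.2) hη
  exact ⟨P, fun x hx => ⟨(hh x).1.trans (hP x hx).1, by linarith [(hh x).2, (hP x hx).2]⟩⟩

theorem exists_polynomial_sub_le_le_indicator {u v η : ℝ} (hu : 0 < u) (huv : u < v)
    (hη : 0 < η) :
    ∃ P : ℝ[X], ∀ x ∈ Icc (0 : ℝ) 1,
      (Ici v).indicator 1 x - η * x ≤ (X * P).eval x ∧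
        (X * P).eval x ≤ (Ici u).indicator 1 x := by
  obtain ⟨h, h0, hh⟩ := exists_continuous_indicator_le_le huv
  obtain ⟨P, hP⟩ := exists_polynomial_sub_le_X_mul_le h.continuous.continuousOn hu
    (fun x hx => h0 hx.2) hη
  exact ⟨P, fun x hx => ⟨by linarith [(hh x).1, (hP x hx).1], (hP x hx).2.trans (hh x).2⟩⟩

theorem eval_X_mul_eq_sum (P : ℝ[X]) (x : ℝ) :
    (X * P).eval x = ∑ i ∈ Finset.range (P.natDegree + 1), P.coeff i * x ^ (i + 1) := by
  rw [eval_mul, eval_X, eval_eq_sum_range, Finset.mul_sum]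
  exact Finset.sum_congr rfl fun i _ => by ring

theorem exp_pow_succ (x : ℝ) (n : ℕ) : exp x ^ (n + 1) = exp ((n + 1) * x) := by
  rw [← exp_nat_mul]; push_cast; rfl

theorem exp_neg_mem_Icc {y : ℝ} (hy : 0 ≤ y) : exp (-y) ∈ Icc (0 : ℝ) 1 :=
  ⟨(exp_pos _).le, exp_le_one_iff.2 (neg_nonpos.2 hy)⟩

section Integrals

variable {c : ℝ}

theorem integral_rpow_mul_exp_neg_pow_succ (hc : 0 < c) (n : ℕ) :
    ∫ s in Ioi 0, s ^ (c - 1) * exp (-s) ^ (n + 1) = ((n : ℝ) + 1) ^ (-c) * Gamma c := by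
  have hn : (0 : ℝ) < n + 1 := by positivity
  simp_rw [exp_pow_succ, mul_neg]
  rw [integral_rpow_mul_exp_neg_mul_Ioi hc hn, one_div, inv_rpow hn.le, rpow_neg hn.le]

theorem integrableOn_rpow_mul_exp_neg_pow_succ (hc : 0 < c) (n : ℕ) :
    IntegrableOn (fun s => s ^ (c - 1) * exp (-s) ^ (n + 1)) (Ioi 0) :=
  .of_integral_ne_zero (by rw [integral_rpow_mul_exp_neg_pow_succ hc]; positivity)

theorem integrableOn_rpow_mul_eval_X_mul (hc : 0 < c) (P : ℝ[X]) :
    IntegrableOn (fun s => s ^ (c - 1) * (X * P).eval (exp (-s))) (Ioi 0) := by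
  simp_rw [eval_X_mul_eq_sum, Finset.mul_sum, mul_left_comm _ (P.coeff _)]
  exact integrable_finsetSum _ fun i _ =>
    (integrableOn_rpow_mul_exp_neg_pow_succ hc i).const_mul _

theorem integral_rpow_mul_eval_X_mul (hc : 0 < c) (P : ℝ[X]) :
    ∫ s in Ioi 0, s ^ (c - 1) * (X * P).eval (exp (-s)) =
      Gamma c * ∑ i ∈ Finset.range (P.natDegree + 1), P.coeff i * ((i : ℝ) + 1) ^ (-c) := by
  simp_rw [eval_X_mul_eq_sum, Finset.mul_sum, mul_left_comm _ (P.coeff _)]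
  rw [integral_finsetSum _ fun i _ => (integrableOn_rpow_mul_exp_neg_pow_succ hc i).const_mul _]
  refine Finset.sum_congr rfl fun i _ => ?_
  rw [integral_const_mul, integral_rpow_mul_exp_neg_pow_succ hc]
  ring

theorem rpow_mul_indicator_add_eq (a η s : ℝ) :
    s ^ (c - 1) * ((Ici (exp (-a))).indicator 1 (exp (-s)) + η * exp (-s)) =
      (Iic a).indicator (fun s => s ^ (c - 1)) s + η * (exp (-s) * s ^ (c - 1)) := by
  have : exp (-s) ∈ Ici (exp (-a)) ↔ s ∈ Iic a := by simp
  by_cases hsa : s ∈ Iic a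
  · rw [indicator_of_mem (this.2 hsa), indicator_of_mem hsa, Pi.one_apply]; ring
  · rw [indicator_of_notMem (mt this.1 hsa), indicator_of_notMem hsa]; ring

theorem integrableOn_indicator_Iic_rpow (hc : 0 < c) (a : ℝ) :
    IntegrableOn ((Iic a).indicator fun s => s ^ (c - 1)) (Ioi 0) := by
  rw [integrableOn_indicator_iff measurableSet_Iic, Iic_inter_Ioi]
  rcases le_total a 0 with ha | ha
  · simp [Ioc_eq_empty_of_le ha]
  · exact (intervalIntegrable_iff_integrableOn_Ioc_of_le ha).1
      (intervalIntegral.intervalIntegrable_rpow' (by linarith))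

theorem integral_indicator_Iic_rpow (hc : 0 < c) {a : ℝ} (ha : 0 ≤ a) :
    ∫ s in Ioi 0, (Iic a).indicator (fun s => s ^ (c - 1)) s = a ^ c / c := by
  rw [integral_indicator measurableSet_Iic, Measure.restrict_restrict measurableSet_Iic,
    Iic_inter_Ioi, ← intervalIntegral.integral_of_le ha, integral_rpow (by left; linarith)]
  simp [zero_rpow hc.ne']

theorem integrableOn_rpow_mul_indicator_add (hc : 0 < c) (a η : ℝ) :
    IntegrableOn
      (fun s => s ^ (c - 1) * ((Ici (exp (-a))).indicator 1 (exp (-s)) + η * exp (-s)))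
      (Ioi 0) := by
  simp_rw [rpow_mul_indicator_add_eq]
  exact (integrableOn_indicator_Iic_rpow hc a).add ((GammaIntegral_convergent hc).const_mul η)

theorem integral_rpow_mul_indicator_add (hc : 0 < c) {a : ℝ} (ha : 0 ≤ a) (η : ℝ) :
    ∫ s in Ioi 0, s ^ (c - 1) * ((Ici (exp (-a))).indicator 1 (exp (-s)) + η * exp (-s)) =
      a ^ c / c + η * Gamma c := by
  simp_rw [rpow_mul_indicator_add_eq]
  rw [integral_add (integrableOn_indicator_Iic_rpow hc a)
    ((GammaIntegral_convergent hc).const_mul η), integral_indicator_Iic_rpow hc ha,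
    integral_const_mul, Gamma_eq_integral hc]

end Integrals

section HeatTrace

variable {lam : ℕ → ℝ} {c A : ℝ}

theorem finite_setOf_le (hinf : Tendsto lam atTop atTop) (x : ℝ) : {j | lam j ≤ x}.Finite := by
  have := hinf.eventually_gt_atTop x
  rw [← Nat.cofinite_eq_atTop, eventually_cofinite] at this
  simpa using this

theorem indicator_Ici_exp_neg_one {t : ℝ} (ht : 0 < t) :
    (fun j => (Ici (exp (-1))).indicator 1 (exp (-t * lam j))) =
      {j | lam j ≤ t⁻¹}.indicator (1 : ℕ → ℝ) := by
  ext j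
  have : exp (-1) ≤ exp (-t * lam j) ↔ lam j ≤ t⁻¹ := by
    rw [exp_le_exp, neg_mul, neg_le_neg_iff, ← le_div_iff₀' ht, one_div]
  simp only [indicator_apply, mem_Ici, mem_ofPred_eq, this, Pi.one_apply]

theorem countingFunction_inv_eq_tsum {t : ℝ} (ht : 0 < t) :
    countingFunction lam t⁻¹ = ∑' j, (Ici (exp (-1))).indicator 1 (exp (-t * lam j)) := by
  rw [indicator_Ici_exp_neg_one ht, ← tsum_subtype, countingFunction]
  simp

theorem summable_indicator_Ici_exp_neg_one (hinf : Tendsto lam atTop atTop) {t : ℝ}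
    (ht : 0 < t) :
    Summable fun j => (Ici (exp (-1))).indicator (1 : ℝ → ℝ) (exp (-t * lam j)) := by
  rw [indicator_Ici_exp_neg_one ht, ← summable_subtype_iff_indicator]
  exact (finite_setOf_le hinf t⁻¹).summable _

theorem summable_exp_pow_succ (hsum : ∀ t : ℝ, 0 < t → Summable fun j => exp (-t * lam j))
    {t : ℝ} (ht : 0 < t) (n : ℕ) : Summable fun j => exp (-t * lam j) ^ (n + 1) := by
  convert hsum ((n + 1) * t) (by positivity) using 2 with j
  rw [exp_pow_succ]; ring_nf

theorem summable_eval_X_mul (hsum : ∀ t : ℝ, 0 < t → Summable fun j => exp (-t * lam j))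
    {t : ℝ} (ht : 0 < t) (P : ℝ[X]) : Summable fun j => (X * P).eval (exp (-t * lam j)) := by
  simp_rw [eval_X_mul_eq_sum]
  exact summable_sum fun i _ => (summable_exp_pow_succ hsum ht i).mul_left _

theorem countingFunction_inv_le_tsum (hnonneg : ∀ j, 0 ≤ lam j) (hinf : Tendsto lam atTop atTop)
    (hsum : ∀ t : ℝ, 0 < t → Summable fun j => exp (-t * lam j)) {t : ℝ} (ht : 0 < t) {P : ℝ[X]}
    (hP : ∀ x ∈ Icc (0 : ℝ) 1, (Ici (exp (-1))).indicator 1 x ≤ (X * P).eval x) :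
    countingFunction lam t⁻¹ ≤ ∑' j, (X * P).eval (exp (-t * lam j)) := by
  rw [countingFunction_inv_eq_tsum ht]
  refine (summable_indicator_Ici_exp_neg_one hinf ht).tsum_le_tsum (fun j => hP _ ?_)
    (summable_eval_X_mul hsum ht P)
  simpa [neg_mul] using exp_neg_mem_Icc (mul_nonneg ht.le (hnonneg j))

theorem tsum_le_countingFunction_inv (hnonneg : ∀ j, 0 ≤ lam j) (hinf : Tendsto lam atTop atTop)
    (hsum : ∀ t : ℝ, 0 < t → Summable fun j => exp (-t * lam j)) {t : ℝ} (ht : 0 < t) {P : ℝ[X]}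
    (hP : ∀ x ∈ Icc (0 : ℝ) 1, (X * P).eval x ≤ (Ici (exp (-1))).indicator 1 x) :
    ∑' j, (X * P).eval (exp (-t * lam j)) ≤ countingFunction lam t⁻¹ := by
  rw [countingFunction_inv_eq_tsum ht]
  refine (summable_eval_X_mul hsum ht P).tsum_le_tsum (fun j => hP _ ?_)
    (summable_indicator_Ici_exp_neg_one hinf ht)
  simpa [neg_mul] using exp_neg_mem_Icc (mul_nonneg ht.le (hnonneg j))

theorem tendsto_rpow_mul_tsum_exp_pow_succ
    (hZ : Tendsto (fun t => t ^ c * ∑' j, exp (-t * lam j)) (𝓝[>] 0) (𝓝 A)) (n : ℕ) :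
    Tendsto (fun t => t ^ c * ∑' j, exp (-t * lam j) ^ (n + 1)) (𝓝[>] 0)
      (𝓝 (((n : ℝ) + 1) ^ (-c) * A)) := by
  have hn : (0 : ℝ) < n + 1 := by positivity
  have hscale : Tendsto (fun t => ((n : ℝ) + 1) * t) (𝓝[>] 0) (𝓝[>] 0) :=
    tendsto_comap.mono_left (comap_mulLeft_nhdsGT_zero hn).ge
  refine ((hZ.comp hscale).const_mul _).congr' ?_
  filter_upwards [self_mem_nhdsWithin] with t (ht : 0 < t)
  simp only [Function.comp, exp_pow_succ]
  rw [mul_rpow hn.le ht.le, ← mul_assoc, ← mul_assoc, ← rpow_add hn, neg_add_cancel, rpow_zero,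
    one_mul]
  congr 2 with j
  ring_nf

theorem tendsto_rpow_mul_tsum_eval_X_mul (hc : 0 < c)
    (hsum : ∀ t : ℝ, 0 < t → Summable fun j => exp (-t * lam j))
    (hZ : Tendsto (fun t => t ^ c * ∑' j, exp (-t * lam j)) (𝓝[>] 0) (𝓝 A)) (P : ℝ[X]) :
    Tendsto (fun t => t ^ c * ∑' j, (X * P).eval (exp (-t * lam j))) (𝓝[>] 0)
      (𝓝 (A / Gamma c * ∫ s in Ioi 0, s ^ (c - 1) * (X * P).eval (exp (-s)))) := by
  have hval : A / Gamma c * ∫ s in Ioi 0, s ^ (c - 1) * (X * P).eval (exp (-s)) =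
      ∑ i ∈ Finset.range (P.natDegree + 1), P.coeff i * (((i : ℝ) + 1) ^ (-c) * A) := by
    rw [integral_rpow_mul_eval_X_mul hc, ← mul_assoc,
      div_mul_cancel₀ _ (Gamma_pos_of_pos hc).ne', Finset.mul_sum]
    exact Finset.sum_congr rfl fun i _ => by ring
  rw [hval]
  refine (tendsto_finsetSum _ fun i _ =>
    (tendsto_rpow_mul_tsum_exp_pow_succ hZ i).const_mul (P.coeff i)).congr' ?_
  filter_upwards [self_mem_nhdsWithin] with t (ht : 0 < t)
  simp_rw [eval_X_mul_eq_sum]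
  rw [Summable.tsum_finsetSum fun i _ => (summable_exp_pow_succ hsum ht i).mul_left _,
    Finset.mul_sum]
  refine Finset.sum_congr rfl fun i _ => ?_
  rw [tsum_mul_left]
  ring

end HeatTrace

theorem tendsto_karamata_bound {c : ℝ} (hc : 0 < c) (A : ℝ) :
    Tendsto (fun η => A / Gamma c * ((1 + η) ^ c / c + η * Gamma c)) (𝓝 0)
      (𝓝 (A / Gamma (c + 1))) := by
  have hcont : ContinuousAt (fun η : ℝ => A / Gamma c * ((1 + η) ^ c / c + η * Gamma c)) 0 := by
    fun_prop (disch := norm_num)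
  have hval : A / Gamma c * ((1 + 0) ^ c / c + 0 * Gamma c) = A / Gamma (c + 1) := by
    rw [Gamma_add_one hc.ne', add_zero, one_rpow, zero_mul, add_zero]
    ring
  simpa only [hval] using hcont.tendsto

section Karamata

variable {lam : ℕ → ℝ} {c A : ℝ}

theorem eventually_rpow_mul_countingFunction_inv_lt (hnonneg : ∀ j, 0 ≤ lam j)
    (hinf : Tendsto lam atTop atTop) (hsum : ∀ t : ℝ, 0 < t → Summable fun j => exp (-t * lam j))
    (hc : 0 < c) (hA : 0 ≤ A)
    (hZ : Tendsto (fun t => t ^ c * ∑' j, exp (-t * lam j)) (𝓝[>] 0) (𝓝 A))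
    {b : ℝ} (hb : A / Gamma (c + 1) < b) :
    ∀ᶠ t in 𝓝[>] 0, t ^ c * countingFunction lam t⁻¹ < b := by
  have hbound := (tendsto_karamata_bound hc A).mono_left (nhdsWithin_le_nhds (s := Ioi 0))
  obtain ⟨η, hηb, hη⟩ :=
    ((hbound.eventually (gt_mem_nhds hb)).and eventually_mem_nhdsWithin).exists
  obtain ⟨P, hP⟩ := exists_polynomial_indicator_le_le (exp_pos (-(1 + η)))
    (exp_lt_exp.2 (show -(1 + η) < -1 by linarith [mem_Ioi.1 hη])) hη
  have hI :
      ∫ s in Ioi 0, s ^ (c - 1) * (X * P).eval (exp (-s)) ≤ (1 + η) ^ c / c + η * Gamma c := by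
    rw [← integral_rpow_mul_indicator_add hc (by linarith [mem_Ioi.1 hη]) η]
    refine setIntegral_mono_on (integrableOn_rpow_mul_eval_X_mul hc P)
      (integrableOn_rpow_mul_indicator_add hc _ η) measurableSet_Ioi fun s (hs : 0 < s) => ?_
    exact mul_le_mul_of_nonneg_left (hP _ (exp_neg_mem_Icc hs.le)).2 (rpow_nonneg hs.le _)
  have hlim := (tendsto_rpow_mul_tsum_eval_X_mul hc hsum hZ P).eventually_lt_const
    ((mul_le_mul_of_nonneg_left hI (div_nonneg hA (Gamma_pos_of_pos hc).le)).trans_lt hηb)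
  filter_upwards [hlim, self_mem_nhdsWithin] with t hlt (ht : 0 < t)
  exact (mul_le_mul_of_nonneg_left (countingFunction_inv_le_tsum hnonneg hinf hsum ht
    fun x hx => (hP x hx).1) (rpow_nonneg ht.le c)).trans_lt hlt

theorem eventually_lt_rpow_mul_countingFunction_inv (hnonneg : ∀ j, 0 ≤ lam j)
    (hinf : Tendsto lam atTop atTop) (hsum : ∀ t : ℝ, 0 < t → Summable fun j => exp (-t * lam j))
    (hc : 0 < c) (hA : 0 ≤ A)
    (hZ : Tendsto (fun t => t ^ c * ∑' j, exp (-t * lam j)) (𝓝[>] 0) (𝓝 A))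
    {a : ℝ} (ha : a < A / Gamma (c + 1)) :
    ∀ᶠ t in 𝓝[>] 0, a < t ^ c * countingFunction lam t⁻¹ := by
  have hbound := (tendsto_karamata_bound hc A).mono_left (nhdsWithin_le_nhds (s := Iio 0))
  obtain ⟨η, hηa, hη⟩ :=
    ((hbound.eventually (lt_mem_nhds ha)).and (Ioo_mem_nhdsLT (neg_one_lt_zero (R := ℝ)))).exists
  obtain ⟨P, hP⟩ := exists_polynomial_sub_le_le_indicator (exp_pos (-1))
    (exp_lt_exp.2 (show -1 < -(1 + η) by linarith [hη.2])) (neg_pos.2 hη.2)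
  have hI :
      (1 + η) ^ c / c + η * Gamma c ≤ ∫ s in Ioi 0, s ^ (c - 1) * (X * P).eval (exp (-s)) := by
    rw [← integral_rpow_mul_indicator_add hc (by linarith [hη.1]) η]
    refine setIntegral_mono_on (integrableOn_rpow_mul_indicator_add hc _ η)
      (integrableOn_rpow_mul_eval_X_mul hc P) measurableSet_Ioi fun s (hs : 0 < s) => ?_
    refine mul_le_mul_of_nonneg_left ?_ (rpow_nonneg hs.le _)
    linarith [(hP _ (exp_neg_mem_Icc hs.le)).1]
  have hlim := (tendsto_rpow_mul_tsum_eval_X_mul hc hsum hZ P).eventually_const_lt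
    (hηa.trans_le (mul_le_mul_of_nonneg_left hI (div_nonneg hA (Gamma_pos_of_pos hc).le)))
  filter_upwards [hlim, self_mem_nhdsWithin] with t hlt (ht : 0 < t)
  exact hlt.trans_le (mul_le_mul_of_nonneg_left
    (tsum_le_countingFunction_inv hnonneg hinf hsum ht fun x hx => (hP x hx).2)
    (rpow_nonneg ht.le c))

theorem tendsto_rpow_neg_mul_countingFunction (hnonneg : ∀ j, 0 ≤ lam j)
    (hinf : Tendsto lam atTop atTop) (hsum : ∀ t : ℝ, 0 < t → Summable fun j => exp (-t * lam j))
    (hc : 0 < c) (hA : 0 ≤ A)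
    (hZ : Tendsto (fun t => t ^ c * ∑' j, exp (-t * lam j)) (𝓝[>] 0) (𝓝 A)) :
    Tendsto (fun x => x ^ (-c) * countingFunction lam x) atTop (𝓝 (A / Gamma (c + 1))) := by
  have h : Tendsto (fun t => t ^ c * countingFunction lam t⁻¹) (𝓝[>] 0)
      (𝓝 (A / Gamma (c + 1))) :=
    tendsto_order.2
      ⟨fun a ha => eventually_lt_rpow_mul_countingFunction_inv hnonneg hinf hsum hc hA hZ ha,
        fun b hb => eventually_rpow_mul_countingFunction_inv_lt hnonneg hinf hsum hc hA hZ hb⟩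
  refine (h.comp tendsto_inv_atTop_nhdsGT_zero).congr' ?_
  filter_upwards [eventually_gt_atTop 0] with x hx
  simp [inv_rpow hx.le, rpow_neg hx.le]

end Karamata

theorem karamata_weyl_general (lam : ℕ → ℝ) (hnonneg : ∀ j, 0 ≤ lam j)
    (hinf : Tendsto lam atTop atTop)
    (A d : ℝ) (hA : 0 < A) (hd : 0 < d)
    (hsum : ∀ t : ℝ, 0 < t → Summable (fun j => Real.exp (-t * lam j)))
    (hasymp : Tendsto (fun t : ℝ =>
        (∑' j, Real.exp (-t * lam j)) / (A * t ^ (-(d / 2))))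
      (nhdsWithin 0 (Set.Ioi 0)) (nhds 1)) :
    Tendsto (fun x : ℝ =>
        (Nat.card {j : ℕ | lam j ≤ x} : ℝ) /
          (A / Real.Gamma (d / 2 + 1) * x ^ (d / 2)))
      atTop (nhds 1) := by
  have hZ : Tendsto (fun t => t ^ (d / 2) * ∑' j, exp (-t * lam j)) (𝓝[>] 0) (𝓝 A) := by
    refine (mul_one A ▸ hasymp.const_mul A).congr' ?_
    filter_upwards [self_mem_nhdsWithin] with t (ht : 0 < t)
    rw [rpow_neg ht.le]
    field_simp
  have hF : 0 < A / Gamma (d / 2 + 1) := by positivity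
  have hN := (tendsto_rpow_neg_mul_countingFunction hnonneg hinf hsum (half_pos hd) hA.le
    hZ).div_const (A / Gamma (d / 2 + 1))
  rw [div_self hF.ne'] at hN
  refine hN.congr' ?_
  filter_upwards [eventually_gt_atTop 0] with x hx
  rw [rpow_neg hx.le, countingFunction]
  field_simp

/-- Karamata's Tauberian theorem: if `∑_j e^{-t λ_j} ~ A t^{-d/2}` as `t → 0⁺`,
then the counting function satisfies `N(λ) ~ (A/Γ(d/2+1)) λ^{d/2}` as `λ → ∞`. -/
theorem karamata_weyl (lam : ℕ → ℝ) (hnonneg : ∀ j, 0 ≤ lam j)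
    (hmono : Monotone lam) (hinf : Tendsto lam atTop atTop)
    (A d : ℝ) (hA : 0 < A) (hd : 0 < d)
    (hsum : ∀ t : ℝ, 0 < t → Summable (fun j => Real.exp (-t * lam j)))
    (hasymp : Tendsto (fun t : ℝ =>
        (∑' j, Real.exp (-t * lam j)) / (A * t ^ (-(d / 2))))
      (nhdsWithin 0 (Set.Ioi 0)) (nhds 1)) :
    Tendsto (fun x : ℝ =>
        (Nat.card {j : ℕ | lam j ≤ x} : ℝ) /
          (A / Real.Gamma (d / 2 + 1) * x ^ (d / 2)))
      atTop (nhds 1) :=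
  karamata_weyl_general lam hnonneg hinf A d hA hd hsum hasymp
end

section
/- Let φ(s) = √π Γ(s − 1/2)ζ(2s − 1)/(Γ(s)ζ(2s)). Then φ(1/2) = −1. -/
/-!
Near `s = 1/2` both `Γ(s - 1/2)` and `ζ(2s)` have simple poles, with residues `1` and `1/2`.
Multiplying numerator and denominator by `s - 1/2` removes them, and the limit becomes
`√π · 1 · ζ(0) / (Γ(1/2) · 1/2) = √π · (-1/2) / (√π / 2) = -1`.
-/

open Complex Filter Topology

theorem Complex.Gamma_one_half_eq_sqrt_pi : Gamma (1 / 2) = (√Real.pi : ℂ) := by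
  simpa using (Gamma_ofReal (1 / 2)).trans (congrArg ((↑) : ℝ → ℂ) Real.Gamma_one_half_eq)

theorem Complex.tendsto_sub_mul_Gamma_sub (a : ℂ) :
    Tendsto (fun s => (s - a) * Gamma (s - a)) (𝓝[≠] a) (𝓝 1) :=
  tendsto_self_mul_Gamma_nhds_zero.comp (by rw [Tendsto, map_subRight_nhdsNE, sub_self])

theorem tendsto_sub_inv_mul_riemannZeta_const_mul {c : ℂ} (hc : c ≠ 0) :
    Tendsto (fun s => (s - c⁻¹) * riemannZeta (c * s)) (𝓝[≠] c⁻¹) (𝓝 c⁻¹) := by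
  have hmap : Tendsto (c * ·) (𝓝[≠] c⁻¹) (𝓝[≠] 1) :=
    ((Homeomorph.mulLeft₀ c hc).map_punctured_nhds_eq c⁻¹).trans_le (by simp [hc])
  convert (riemannZeta_residue_one.comp hmap).const_mul c⁻¹ using 2 with s
  · simp only [Function.comp_apply]
    field_simp
  · simp

/-- The scattering determinant `φ(s) = √π Γ(s-1/2)ζ(2s-1)/(Γ(s)ζ(2s))`
satisfies `lim_{s→1/2} φ(s) = -1`. -/
theorem scatteringPhi_at_half :
    Tendsto (fun s : ℂ =>
        (Real.sqrt Real.pi : ℂ) * Complex.Gamma (s - 1 / 2) *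
          riemannZeta (2 * s - 1) / (Complex.Gamma s * riemannZeta (2 * s)))
      (nhdsWithin (1 / 2 : ℂ) {(1 / 2 : ℂ)}ᶜ) (nhds (-1)) := by
  have hGammaPole := tendsto_sub_mul_Gamma_sub (1 / 2)
  have hZetaPole :
      Tendsto (fun s => (s - 1 / 2) * riemannZeta (2 * s)) (𝓝[≠] (1 / 2)) (𝓝 (1 / 2)) := by
    simpa using tendsto_sub_inv_mul_riemannZeta_const_mul (two_ne_zero (α := ℂ))
  have hZetaZero :
      Tendsto (fun s : ℂ => riemannZeta (2 * s - 1)) (𝓝[≠] (1 / 2)) (𝓝 (-1 / 2)) := by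
    have hlin : Tendsto (fun s : ℂ => 2 * s - 1) (𝓝 (1 / 2)) (𝓝 0) :=
      (by fun_prop : Continuous fun s : ℂ => 2 * s - 1).tendsto' _ _ (by norm_num)
    rw [← riemannZeta_zero]
    exact ((differentiableAt_riemannZeta zero_ne_one).continuousAt.tendsto.comp hlin).mono_left
      nhdsWithin_le_nhds
  have hGammaHalf : Tendsto Gamma (𝓝[≠] (1 / 2)) (𝓝 (√Real.pi)) :=
    Gamma_one_half_eq_sqrt_pi ▸
      hasDerivAt_Gamma_one_half.continuousAt.tendsto.mono_left nhdsWithin_le_nhds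
  have hlim := ((tendsto_const_nhds (x := (√Real.pi : ℂ))).mul hGammaPole |>.mul hZetaZero).div
    (hGammaHalf.mul hZetaPole) (by simp [Real.sqrt_ne_zero', Real.pi_pos])
  rw [show (√Real.pi : ℂ) * 1 * (-1 / 2) / (√Real.pi * (1 / 2)) = -1 by field_simp] at hlim
  refine hlim.congr' ?_
  filter_upwards [self_mem_nhdsWithin] with s hs
  rw [Pi.div_apply, mul_left_comm _ (s - 1 / 2), mul_assoc, mul_left_comm (Gamma s),
    mul_div_mul_left _ _ (sub_ne_zero.2 hs), mul_assoc]
end
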